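/- arXiv:2403.17285 — 4 statements merged into one kernel-verified Lean document; each statement's English description precedes it below -/
import Mathlib

section
/- Let K, m be natural numbers with 1 ≤ K ≤ m. Then ∑_{l₁=1}^{m} ∑_{l₂=1}^{m} max(K - m + l₁ - l₂, 0) = K(K²-1)/6. -/
open Finset

private lemma max_cast_aux (a b : ℕ) : max ((a:ℝ) - (b:ℝ)) 0 = ((a - b : ℕ) : ℝ) := by
  rcases le_total a b with h | h
  · rw [Nat.sub_eq_zero_of_le h, max_eq_right]
    · simp
    · have : (a:ℝ) ≤ b := by exact_mod_cast h
      linarith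
  · rw [Nat.cast_sub h, max_eq_left]
    have : (b:ℝ) ≤ a := by exact_mod_cast h
    linarith

private lemma inner_sum_aux (c m : ℕ) (h : c ≤ m + 1) :
    (∑ l ∈ Icc 1 m, (c - l)) * 2 = c * (c - 1) := by
  have h1 : ∑ l ∈ Icc 1 m, (c - l) = ∑ i ∈ range m, (c - 1 - i) := by
    rw [← Finset.Ico_add_one_right_eq_Icc, Finset.sum_Ico_eq_sum_range]
    exact Finset.sum_congr (by congr 1) fun i _ => by omega
  have h2 : ∑ i ∈ range m, (c - 1 - i) = ∑ i ∈ range (c - 1), (c - 1 - i) := by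
    symm
    apply Finset.sum_subset (Finset.range_subset_range.mpr (by omega))
    intro x _ hx
    simp only [Finset.mem_range, not_lt] at hx
    omega
  have h3 : ∑ i ∈ range (c - 1), (c - 1 - i) = ∑ i ∈ range (c - 1), (i + 1) := by
    rw [← Finset.sum_range_reflect]
    exact Finset.sum_congr rfl fun i hi => by
      simp only [Finset.mem_range] at hi; omega
  have h4 : (∑ i ∈ range (c - 1), (i + 1)) * 2 = c * (c - 1) := by
    rcases Nat.eq_zero_or_pos c with rfl | hc
    · simp
    · have : ∑ i ∈ range (c - 1), (i + 1) = ∑ i ∈ range c, i := by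
        obtain ⟨d, rfl⟩ : ∃ d, c = d + 1 := ⟨c - 1, by omega⟩
        rw [Finset.sum_range_succ']
        simp
      rw [this, Finset.sum_range_id_mul_two]
  rw [h1, h2, h3, h4]

private lemma cube_sum_aux (n : ℕ) :
    (∑ i ∈ range n, (i + 1) * i) * 3 = (n + 1) * n * (n - 1) := by
  induction n with
  | zero => simp
  | succ k ih =>
    rw [Finset.sum_range_succ, add_mul, ih]
    cases k with
    | zero => simp
    | succ j =>
      simp only [Nat.add_sub_cancel]
      ring

/-- For `1 ≤ K ≤ m`, `∑_{l₁=1}^m ∑_{l₂=1}^m max(K - m + l₁ - l₂, 0) = K(K²-1)/6`. -/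
theorem stmt_4 (K m : ℕ) (hK : 1 ≤ K) (hKm : K ≤ m) :
    ∑ l₁ ∈ Finset.Icc 1 m, ∑ l₂ ∈ Finset.Icc 1 m,
        max ((K : ℝ) - (m : ℝ) + (l₁ : ℝ) - (l₂ : ℝ)) 0
      = (K : ℝ) * ((K : ℝ) ^ 2 - 1) / 6 := by
  -- Step 1: convert to a natural-number double sum
  have hcast : ∀ l₁ l₂ : ℕ,
      max ((K : ℝ) - (m : ℝ) + (l₁ : ℝ) - (l₂ : ℝ)) 0
        = ((K + l₁ - (m + l₂) : ℕ) : ℝ) := by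
    intro l₁ l₂
    have h := max_cast_aux (K + l₁) (m + l₂)
    push_cast at h
    rw [← h]
    ring_nf
  set S : ℕ := ∑ l₁ ∈ Icc 1 m, ∑ l₂ ∈ Icc 1 m, (K + l₁ - (m + l₂)) with hS
  have hsum : ∑ l₁ ∈ Finset.Icc 1 m, ∑ l₂ ∈ Finset.Icc 1 m,
      max ((K : ℝ) - (m : ℝ) + (l₁ : ℝ) - (l₂ : ℝ)) 0 = (S : ℝ) := by
    rw [hS]
    push_cast
    exact Finset.sum_congr rfl fun l₁ _ => Finset.sum_congr rfl fun l₂ _ => hcast l₁ l₂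
  -- Step 2: inner sums
  have h2S : S * 2 = ∑ l₁ ∈ Icc 1 m, (K + l₁ - m) * (K + l₁ - m - 1) := by
    rw [hS, Finset.sum_mul]
    refine Finset.sum_congr rfl fun l₁ hl₁ => ?_
    simp only [Finset.mem_Icc] at hl₁
    have heq : ∑ l₂ ∈ Icc 1 m, (K + l₁ - (m + l₂)) = ∑ l₂ ∈ Icc 1 m, (K + l₁ - m - l₂) :=
      Finset.sum_congr rfl fun l₂ _ => by omega
    rw [heq, inner_sum_aux (K + l₁ - m) m (by omega)]
  -- Step 3: outer sum equals ∑_{i < K} (i+1)*i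
  have h3 : ∑ l₁ ∈ Icc 1 m, (K + l₁ - m) * (K + l₁ - m - 1)
      = ∑ i ∈ range K, (i + 1) * i := by
    rw [← Finset.Ico_add_one_right_eq_Icc, Finset.sum_Ico_eq_sum_range]
    have hm : m + 1 - 1 = m := by omega
    rw [hm, ← Finset.sum_range_reflect]
    have hstep : ∀ i ∈ range m, (K + (1 + (m - 1 - i)) - m) * (K + (1 + (m - 1 - i)) - m - 1)
        = (K - i) * (K - i - 1) := fun i hi => by
      simp only [Finset.mem_range] at hi; congr 1 <;> omega
    rw [Finset.sum_congr rfl hstep]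
    have hsub : ∑ i ∈ range m, (K - i) * (K - i - 1) = ∑ i ∈ range K, (K - i) * (K - i - 1) := by
      symm
      apply Finset.sum_subset (Finset.range_subset_range.mpr hKm)
      intro x _ hx
      simp only [Finset.mem_range, not_lt] at hx
      have : K - x = 0 := by omega
      rw [this]; simp
    rw [hsub, ← Finset.sum_range_reflect]
    exact Finset.sum_congr rfl fun i hi => by
      simp only [Finset.mem_range] at hi; congr 1 <;> omega
  -- Step 4: combine in ℕ
  have h6 : S * 6 = (K + 1) * K * (K - 1) := by
    have : S * 6 = (S * 2) * 3 := by ring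
    rw [this, h2S, h3, cube_sum_aux]
  -- Step 5: cast to ℝ
  have hcastS : (S : ℝ) * 6 = ((K : ℝ) + 1) * K * ((K : ℝ) - 1) := by
    have := congrArg (Nat.cast : ℕ → ℝ) h6
    push_cast [Nat.cast_sub hK] at this
    exact_mod_cast this
  rw [hsum]
  have : ((K : ℝ) + 1) * K * ((K : ℝ) - 1) = (K : ℝ) * ((K : ℝ) ^ 2 - 1) := by ring
  rw [this] at hcastS
  linarith
end

section
/- Fix ρ ∈ (0,1). The function f : ℕ≥1 → ℝ defined by f(m) = (1-ρ^m)/(m(1+ρ^m)) is strictly decreasing in m, i.e., f(m+1) < f(m) for all m ≥ 1. -/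
/-- For fixed `ρ ∈ (0,1)`, the map `m ↦ (1-ρ^m)/(m(1+ρ^m))` on positive integers is
strictly decreasing: `f(m+1) < f(m)` for all `m ≥ 1`. -/
theorem stmt_5 (ρ : ℝ) (hρ0 : 0 < ρ) (hρ1 : ρ < 1) :
    ∀ m : ℕ, 1 ≤ m →
      (1 - ρ ^ (m + 1)) / (((m : ℝ) + 1) * (1 + ρ ^ (m + 1)))
        < (1 - ρ ^ m) / ((m : ℝ) * (1 + ρ ^ m)) := by
  intro m hm
  have hm0 : (0:ℝ) < m := by exact_mod_cast hm
  have hpm : 0 < ρ ^ m := pow_pos hρ0 m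
  have hpm1 : ρ ^ m < 1 := pow_lt_one₀ hρ0.le hρ1 (by omega)
  have hpm1' : 0 < ρ ^ (m+1) := pow_pos hρ0 (m+1)
  -- key sum inequality
  have hterm : ∀ i ∈ Finset.range m,
      2 * ρ ^ m < ρ ^ i + ρ ^ (m + 1 + (m - 1 - i)) := by
    intro i hi
    have hi' : i < m := Finset.mem_range.mp hi
    obtain ⟨d, hd, hmd⟩ : ∃ d, 1 ≤ d ∧ m = i + d := ⟨m - i, by omega, by omega⟩
    have he : m + 1 + (m - 1 - i) = i + 2 * d := by omega
    rw [he, hmd]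
    have h1 : ρ ^ (i + d) = ρ ^ i * ρ ^ d := pow_add ρ i d
    have h2 : ρ ^ (i + 2 * d) = ρ ^ i * (ρ ^ d) ^ 2 := by
      rw [pow_add]; ring
    have h3 : ρ ^ d < 1 := pow_lt_one₀ hρ0.le hρ1 (by omega)
    have h4 : 0 < ρ ^ i := pow_pos hρ0 i
    nlinarith [mul_pos h4 (pow_pos (by nlinarith : (0:ℝ) < 1 - ρ ^ d) 2)]
  have hsum : ∑ i ∈ Finset.range m, (2 * ρ ^ m)
      < ∑ i ∈ Finset.range m, (ρ ^ i + ρ ^ (m + 1 + (m - 1 - i))) :=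
    Finset.sum_lt_sum_of_nonempty (Finset.nonempty_range_iff.mpr (by omega)) hterm
  have hsplit : ∑ i ∈ Finset.range m, (ρ ^ i + ρ ^ (m + 1 + (m - 1 - i)))
      = (∑ i ∈ Finset.range m, ρ ^ i) + ∑ i ∈ Finset.range m, ρ ^ (m + 1 + i) := by
    rw [Finset.sum_add_distrib]
    congr 1
    exact Finset.sum_range_reflect (fun i => ρ ^ (m + 1 + i)) m
  have hgeom : (1 - ρ) * ∑ i ∈ Finset.range m, ρ ^ i = 1 - ρ ^ m := by
    have := geom_sum_mul ρ m
    nlinarith [this]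
  have hgeom2 : (1 - ρ) * ∑ i ∈ Finset.range m, ρ ^ (m + 1 + i)
      = ρ ^ (m + 1) * (1 - ρ ^ m) := by
    have : ∑ i ∈ Finset.range m, ρ ^ (m + 1 + i)
        = ρ ^ (m + 1) * ∑ i ∈ Finset.range m, ρ ^ i := by
      rw [Finset.mul_sum]
      exact Finset.sum_congr rfl fun i _ => pow_add ρ (m + 1) i
    rw [this]
    nlinarith [hgeom]
  have hρ' : 0 < 1 - ρ := by linarith
  have hkey : 2 * (m : ℝ) * ρ ^ m * (1 - ρ) < (1 - ρ ^ m) * (1 + ρ ^ (m + 1)) := by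
    have hc : ∑ i ∈ Finset.range m, (2 * ρ ^ m) = (m : ℝ) * (2 * ρ ^ m) := by
      simp
    have h := mul_lt_mul_of_pos_left (hsum.trans_eq hsplit) hρ'
    rw [hc] at hsum
    have h2 : (1 - ρ) * ((m : ℝ) * (2 * ρ ^ m))
        < (1 - ρ ^ m) + ρ ^ (m + 1) * (1 - ρ ^ m) := by
      calc (1 - ρ) * ((m : ℝ) * (2 * ρ ^ m))
          < (1 - ρ) * ((∑ i ∈ Finset.range m, ρ ^ i)
              + ∑ i ∈ Finset.range m, ρ ^ (m + 1 + i)) := by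
            apply mul_lt_mul_of_pos_left _ hρ'
            exact hsum.trans_eq hsplit
        _ = (1 - ρ ^ m) + ρ ^ (m + 1) * (1 - ρ ^ m) := by
            rw [mul_add, hgeom, hgeom2]
    nlinarith [h2]
  have hd1 : 0 < (m : ℝ) * (1 + ρ ^ m) := by positivity
  have hd2 : 0 < ((m : ℝ) + 1) * (1 + ρ ^ (m + 1)) := by positivity
  rw [div_lt_div_iff₀ hd2 hd1]
  have hb : ρ ^ (m + 1) = ρ ^ m * ρ := pow_succ ρ m
  nlinarith [hkey, hb, hpm, hpm1']
end

section
/- Let ρ ∈ (0,1) and m ≥ 1. Then ρ^m / (m(1 − ρ^{2m})) > ρ^{m+1} / ((m+1)(1 − ρ^{2(m+1)})), i.e., the map m ↦ ρ^m/(m(1−ρ^{2m})) on positive integers is strictly decreasing. -/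
/-- For `ρ ∈ (0,1)`, the map `m ↦ ρ^m/(m(1−ρ^{2m}))` on positive integers is strictly
decreasing: `ρ^{m+1}/((m+1)(1−ρ^{2(m+1)})) < ρ^m/(m(1−ρ^{2m}))` for all `m ≥ 1`. -/
theorem stmt_18 (ρ : ℝ) (hρ0 : 0 < ρ) (hρ1 : ρ < 1) :
    ∀ m : ℕ, 1 ≤ m →
      ρ ^ (m + 1) / (((m : ℝ) + 1) * (1 - ρ ^ (2 * (m + 1))))
        < ρ ^ m / ((m : ℝ) * (1 - ρ ^ (2 * m))) := by
  intro m hm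
  have hm1 : (1 : ℝ) ≤ (m : ℝ) := by exact_mod_cast hm
  have hmpos : (0 : ℝ) < m := lt_of_lt_of_le one_pos hm1
  have h2m : ρ ^ (2 * m) < 1 := pow_lt_one₀ hρ0.le hρ1 (by positivity)
  have h2m1 : ρ ^ (2 * (m + 1)) < 1 := pow_lt_one₀ hρ0.le hρ1 (by positivity)
  have hd1 : (0 : ℝ) < ((m : ℝ) + 1) * (1 - ρ ^ (2 * (m + 1))) := by
    apply mul_pos (by linarith) (by linarith)
  have hd2 : (0 : ℝ) < (m : ℝ) * (1 - ρ ^ (2 * m)) := by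
    apply mul_pos hmpos (by linarith)
  rw [div_lt_div_iff₀ hd1 hd2]
  have hpow : ρ ^ (2 * (m + 1)) < ρ ^ (2 * m) :=
    pow_lt_pow_right_of_lt_one₀ hρ0 hρ1 (by omega)
  have hpm : (0 : ℝ) < ρ ^ m := pow_pos hρ0 m
  have h2mpos : (0 : ℝ) < ρ ^ (2 * m) := pow_pos hρ0 _
  have key : ρ * ((m : ℝ) * (1 - ρ ^ (2 * m))) < ((m : ℝ) + 1) * (1 - ρ ^ (2 * (m + 1))) := by
    nlinarith [mul_pos hmpos h2mpos]
  calc ρ ^ (m + 1) * ((m : ℝ) * (1 - ρ ^ (2 * m)))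
      = ρ ^ m * (ρ * ((m : ℝ) * (1 - ρ ^ (2 * m)))) := by ring
    _ < ρ ^ m * (((m : ℝ) + 1) * (1 - ρ ^ (2 * (m + 1)))) := by
        exact mul_lt_mul_of_pos_left key hpm
end

section
/- Let K, m be natural numbers with K ≥ 1 and m ≥ K, and define c : ℤ → ℝ by c(h) = max(K − |h|, 0)/K. Then ∑_{l₁=1}^{m} ∑_{l₂=1}^{m} c(m + l₂ − l₁) = (K² − 1)/6. -/
open Finset

private lemma icc_sum (n : ℕ) : ∑ l ∈ Icc 1 n, (l : ℝ) = n * (n + 1) / 2 := by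
  induction n with
  | zero => simp
  | succ n ih =>
    rw [Finset.sum_Icc_succ_top (by omega : 1 ≤ n + 1), ih]
    push_cast
    ring

private lemma tri_sum (K : ℕ) :
    ∑ l ∈ Icc 1 K, (l : ℝ) * ((l : ℝ) - 1) / 2 = (K : ℝ) * ((K : ℝ) ^ 2 - 1) / 6 := by
  induction K with
  | zero => simp
  | succ K ih =>
    rw [Finset.sum_Icc_succ_top (by omega : 1 ≤ K + 1), ih]
    push_cast
    ring

private noncomputable def g (a : ℤ) : ℝ :=
  ((max a 0 : ℤ) : ℝ) * (((max a 0 : ℤ) : ℝ) - 1) / 2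

private lemma myInnerSum (m : ℕ) (a : ℤ) (ha : a ≤ (m : ℤ) + 1) :
    ∑ l ∈ Icc 1 m, max ((a : ℝ) - (l : ℝ)) 0 = g a := by
  induction m with
  | zero =>
    have h0 : max a 0 = 0 ∨ max a 0 = 1 := by omega
    rcases h0 with h | h <;> simp [g, h]
  | succ m ih =>
    rw [Finset.sum_Icc_succ_top (by omega : 1 ≤ m + 1)]
    by_cases hle : a ≤ (m : ℤ) + 1
    · have hle' : (a : ℝ) ≤ (m : ℝ) + 1 := by exact_mod_cast hle
      rw [ih hle, max_eq_right (by push_cast; linarith : (a : ℝ) - ((m : ℕ) + 1 : ℕ) ≤ 0)]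
      simp
    · have hae : a = (m : ℤ) + 2 := by omega
      have h1 : ∑ l ∈ Icc 1 m, max ((a : ℝ) - (l : ℝ)) 0
          = ∑ l ∈ Icc 1 m, ((a : ℝ) - (l : ℝ)) := by
        refine Finset.sum_congr rfl fun l hl => ?_
        simp only [Finset.mem_Icc] at hl
        apply max_eq_left
        have : (l : ℝ) ≤ m := by exact_mod_cast hl.2
        rw [hae]; push_cast; linarith
      rw [h1, Finset.sum_sub_distrib, Finset.sum_const, icc_sum]
      have hcard : (Icc 1 m).card = m := by simp
      rw [hcard]
      have h2 : max ((a : ℝ) - ((m + 1 : ℕ) : ℝ)) 0 = (a : ℝ) - ((m + 1 : ℕ) : ℝ) := by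
        apply max_eq_left; rw [hae]; push_cast; linarith
      rw [h2]
      have h3 : max a 0 = (m : ℤ) + 2 := by omega
      have h4 : ((max a 0 : ℤ) : ℝ) = (m : ℝ) + 2 := by rw [h3]; push_cast; ring
      simp only [g]
      rw [h4, hae]
      push_cast
      ring

private lemma outer_sum (K m : ℕ) (hK : 1 ≤ K) (hKm : K ≤ m) :
    ∑ l ∈ Icc 1 m, g ((K : ℤ) - (m : ℤ) + (l : ℤ)) = (K : ℝ) * ((K : ℝ) ^ 2 - 1) / 6 := by
  induction m, hKm using Nat.le_induction with
  | base =>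
    rw [← tri_sum K]
    refine Finset.sum_congr rfl fun l hl => ?_
    simp only [Finset.mem_Icc] at hl
    have h1 : (K : ℤ) - (K : ℤ) + (l : ℤ) = (l : ℤ) := by ring
    have h2 : max (l : ℤ) 0 = (l : ℤ) := by omega
    rw [h1]
    simp only [g, h2]
    push_cast
    ring
  | succ m hm ih =>
    rw [← Finset.Ico_add_one_right_eq_Icc, Finset.sum_Ico_eq_sum_range]
    have hr : m + 1 + 1 - 1 = m + 1 := by omega
    rw [hr]
    have hterm : ∀ i ∈ Finset.range (m + 1),
        g ((K : ℤ) - ((m + 1 : ℕ) : ℤ) + ((1 + i : ℕ) : ℤ)) = g ((K : ℤ) - (m : ℤ) + (i : ℤ)) := by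
      intro i _
      congr 1
      push_cast
      ring
    rw [Finset.sum_congr rfl hterm, Finset.sum_range_succ']
    have h0 : g ((K : ℤ) - (m : ℤ) + ((0 : ℕ) : ℤ)) = 0 := by
      have hmax : max ((K : ℤ) - (m : ℤ) + ((0 : ℕ) : ℤ)) 0 = 0 := by omega
      simp only [g, hmax]
      norm_num
    rw [h0, add_zero, ← ih]
    rw [← Finset.Ico_add_one_right_eq_Icc, Finset.sum_Ico_eq_sum_range]
    have hr2 : m + 1 - 1 = m := by omega
    rw [hr2]
    refine Finset.sum_congr rfl fun i _ => ?_
    congr 1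
    push_cast
    ring

/-- For `1 ≤ K ≤ m`, with moving-average autocovariance `c(h) = max(K − |h|, 0)/K`,
the total cross-covariance between two adjacent blocks of length `m` satisfies
`∑_{l₁=1}^m ∑_{l₂=1}^m c(m + l₂ − l₁) = (K² − 1)/6`. -/
theorem stmt_19 (K m : ℕ) (hK : 1 ≤ K) (hKm : K ≤ m) :
    ∑ l₁ ∈ Finset.Icc 1 m, ∑ l₂ ∈ Finset.Icc 1 m,
        max ((K : ℝ) - ((|(m : ℤ) + (l₂ : ℤ) - (l₁ : ℤ)| : ℤ) : ℝ)) 0 / (K : ℝ)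
      = ((K : ℝ) ^ 2 - 1) / 6 := by
  have hmain : ∑ l₁ ∈ Finset.Icc 1 m, ∑ l₂ ∈ Finset.Icc 1 m,
      max ((K : ℝ) - ((|(m : ℤ) + (l₂ : ℤ) - (l₁ : ℤ)| : ℤ) : ℝ)) 0
      = (K : ℝ) * ((K : ℝ) ^ 2 - 1) / 6 := by
    rw [← outer_sum K m hK hKm]
    refine Finset.sum_congr rfl fun l₁ hl₁ => ?_
    simp only [Finset.mem_Icc] at hl₁
    rw [← myInnerSum m ((K : ℤ) - (m : ℤ) + (l₁ : ℤ)) (by omega)]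
    refine Finset.sum_congr rfl fun l₂ hl₂ => ?_
    simp only [Finset.mem_Icc] at hl₂
    have habs : |(m : ℤ) + (l₂ : ℤ) - (l₁ : ℤ)| = (m : ℤ) + (l₂ : ℤ) - (l₁ : ℤ) := by
      apply abs_of_nonneg; omega
    rw [habs]
    congr 1
    push_cast
    ring
  calc (∑ l₁ ∈ Finset.Icc 1 m, ∑ l₂ ∈ Finset.Icc 1 m,
        max ((K : ℝ) - ((|(m : ℤ) + (l₂ : ℤ) - (l₁ : ℤ)| : ℤ) : ℝ)) 0 / (K : ℝ))
        = (∑ l₁ ∈ Finset.Icc 1 m, ∑ l₂ ∈ Finset.Icc 1 m,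
        max ((K : ℝ) - ((|(m : ℤ) + (l₂ : ℤ) - (l₁ : ℤ)| : ℤ) : ℝ)) 0) / (K : ℝ) := by
          rw [Finset.sum_div]
          refine Finset.sum_congr rfl fun l₁ _ => ?_
          rw [Finset.sum_div]
      _ = ((K : ℝ) ^ 2 - 1) / 6 := by
          rw [hmain]
          have hK0 : (K : ℝ) ≠ 0 := by positivity
          field_simp
end
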